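/- For every integer n ≥ 0, the deterministic random walk satisfies S_n(√2 − 1) ≥ 0. -/

import Mathlib

/-!
Put `θ = √2 - 1`, so that `θ (2 + θ) = 1`, and `a = ⌊nθ⌋`, `c = ⌊aθ⌋`. The sign of the walk at
step `j` is `(-1) ^ ⌊jθ⌋`, and `1 / θ = 2 + θ` makes the walk renormalise onto itself:
`S n = S c + 1 + (-1) ^ a (n - 2a - c - 1)`, where `1 ≤ n - 2a - c ≤ 3` for `n ≥ 1`.
Strong induction then gives `S n ≥ 0`; the only delicate case is `a` odd with `n - 2a - c = 3`,
where `⌊(a + 1)θ⌋ = c + 1` is a jump, which forces `a = 2c + 2 + ⌊(c + 1)θ⌋`: the step after `c`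
then has sign `(-1) ^ a = -1`, so `S c = S (c + 1) + 1 ≥ 1`.
-/

/-- The deterministic random walk `S_n(ξ) = ∑_{j=1}^n (-1)^⌊j·ξ⌋`. -/
noncomputable def S (ξ : ℝ) (n : ℕ) : ℤ :=
  ∑ j ∈ Finset.Icc 1 n, ((Int.negOnePow ⌊(j : ℝ) * ξ⌋ : ℤˣ) : ℤ)

theorem S_zero (ξ : ℝ) : S ξ 0 = 0 := by simp [S]

theorem S_succ_of_nonneg {ξ : ℝ} (hξ : 0 ≤ ξ) (n : ℕ) :
    S ξ (n + 1) = S ξ n + (-1) ^ ⌊((n + 1 : ℕ) : ℝ) * ξ⌋₊ := by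
  rw [S, S, Finset.sum_Icc_succ_top (by omega), ← Int.natCast_floor_eq_floor (by positivity),
    Int.coe_negOnePow_natCast]

theorem Nat.floor_succ_mul_eq_or {ξ : ℝ} (h0 : 0 ≤ ξ) (h1 : ξ ≤ 1) (n : ℕ) :
    ⌊((n + 1 : ℕ) : ℝ) * ξ⌋₊ = ⌊(n : ℝ) * ξ⌋₊ ∨
      ⌊((n + 1 : ℕ) : ℝ) * ξ⌋₊ = ⌊(n : ℝ) * ξ⌋₊ + 1 := by
  have hlo : ⌊(n : ℝ) * ξ⌋₊ ≤ ⌊((n + 1 : ℕ) : ℝ) * ξ⌋₊ :=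
    Nat.floor_le_floor (by push_cast; nlinarith)
  have hhi : ⌊((n + 1 : ℕ) : ℝ) * ξ⌋₊ ≤ ⌊(n : ℝ) * ξ⌋₊ + 1 := by
    rw [← Nat.floor_add_one (by positivity)]
    exact Nat.floor_le_floor (by push_cast; nlinarith)
  omega

theorem Irrational.natFloor_lt {x : ℝ} (hx : Irrational x) (h0 : 0 ≤ x) : (⌊x⌋₊ : ℝ) < x :=
  (Nat.floor_le h0).lt_of_ne (hx.ne_nat _).symm

namespace SqrtTwoSubOne

local notation "θ" => √2 - 1

theorem nonneg : 0 ≤ θ := by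
  have : 1 ≤ √2 := Real.one_le_sqrt.2 one_le_two
  linarith

theorem mul_two_add : θ * (2 + θ) = 1 := by
  have := Real.sq_sqrt (zero_le_two : (0 : ℝ) ≤ 2)
  nlinarith

theorem le_one : θ ≤ 1 := by
  nlinarith [mul_two_add, nonneg]

theorem irrational_natCast_mul {k : ℕ} (hk : k ≠ 0) : Irrational (k * θ) := by
  have : Irrational (√2 - (1 : ℕ)) := irrational_sqrt_two.sub_natCast 1
  exact (by simpa using this : Irrational θ).natCast_mul hk

/-- `⌊nθ⌋`, the number of sign changes of the walk among its first `n` steps. -/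
noncomputable def beatty (n : ℕ) : ℕ := ⌊(n : ℝ) * θ⌋₊

theorem natCast_eq_mul_mul_two_add (n : ℕ) : (n : ℝ) = n * θ * (2 + θ) := by
  rw [mul_assoc, mul_two_add, mul_one]

theorem beatty_le (n : ℕ) : (beatty n : ℝ) ≤ n * θ :=
  Nat.floor_le (mul_nonneg n.cast_nonneg nonneg)

theorem beatty_lt_of_ne_zero {n : ℕ} (hn : n ≠ 0) : (beatty n : ℝ) < n * θ :=
  (irrational_natCast_mul hn).natFloor_lt
    (mul_nonneg n.cast_nonneg nonneg)

theorem lt_beatty_add_one (n : ℕ) : n * θ < beatty n + 1 := Nat.lt_floor_add_one _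

theorem beatty_succ_eq_or (n : ℕ) : beatty (n + 1) = beatty n ∨ beatty (n + 1) = beatty n + 1 :=
  Nat.floor_succ_mul_eq_or nonneg le_one n

theorem S_succ_eq (n : ℕ) : S θ (n + 1) = S θ n + (-1) ^ beatty (n + 1) :=
  S_succ_of_nonneg nonneg n

theorem two_mul_beatty_add_beatty_beatty_lt {n : ℕ} (hn : n ≠ 0) :
    2 * beatty n + beatty (beatty n) < n := by
  have ha := beatty_lt_of_ne_zero hn
  have hc := beatty_le (beatty n)
  have hθ := nonneg
  have : ((2 * beatty n + beatty (beatty n) : ℕ) : ℝ) < n := by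
    rw [natCast_eq_mul_mul_two_add n]
    push_cast
    nlinarith
  exact_mod_cast this

theorem le_two_mul_beatty_add_beatty_succ (n : ℕ) :
    n ≤ 2 * beatty n + 2 + beatty (beatty n + 1) := by
  have ha := lt_beatty_add_one n
  have hc := lt_beatty_add_one (beatty n + 1)
  have hθ := nonneg
  have : (n : ℝ) < ((2 * beatty n + 3 + beatty (beatty n + 1) : ℕ) : ℝ) := by
    rw [natCast_eq_mul_mul_two_add n]
    push_cast at hc ⊢
    nlinarith
  have : n < 2 * beatty n + 3 + beatty (beatty n + 1) := by exact_mod_cast this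
  omega

theorem eq_of_beatty_succ {m : ℕ} (h : beatty (m + 1) = beatty m + 1) :
    m = 2 * beatty m + 2 + beatty (beatty m + 1) := by
  have ha : ((beatty m + 1 : ℕ) : ℝ) ≤ (m + 1 : ℕ) * θ := h ▸ beatty_le (m + 1)
  have hc := beatty_lt_of_ne_zero (Nat.succ_ne_zero (beatty m))
  have hθ := nonneg
  have hm := natCast_eq_mul_mul_two_add (m + 1)
  have hlt : ((2 * beatty m + 1 + beatty (beatty m + 1) : ℕ) : ℝ) < m := by
    push_cast at ha hc hm ⊢
    nlinarith
  have hle := le_two_mul_beatty_add_beatty_succ m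
  have : 2 * beatty m + 1 + beatty (beatty m + 1) < m := by exact_mod_cast hlt
  omega

theorem S_eq_renormalized (n : ℕ) :
    S θ n = S θ (beatty (beatty n)) + 1 +
      (-1) ^ beatty n * ((n : ℤ) - 2 * beatty n - beatty (beatty n) - 1) := by
  induction n with
  | zero => simp [S_zero, beatty]
  | succ n ih =>
    rw [S_succ_eq, ih]
    rcases beatty_succ_eq_or n with hn | hn
    · rw [hn]; push_cast; ring
    have hjn : (n : ℤ) = 2 * beatty n + 2 + beatty (beatty n + 1) := by
      exact_mod_cast eq_of_beatty_succ hn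
    rw [hn]
    rcases beatty_succ_eq_or (beatty n) with ha | ha
    · rw [ha] at hjn ⊢
      push_cast
      linear_combination 2 * (-1 : ℤ) ^ beatty n * hjn
    -- `a = 2c + 2 + ⌊(c + 1)θ⌋`, so the new step of the renormalised walk has sign `(-1) ^ a`
    have hsign : (-1 : ℤ) ^ beatty (beatty (beatty n) + 1) = (-1) ^ beatty n := by
      nth_rw 2 [eq_of_beatty_succ ha]
      simp [pow_add, pow_mul]
    rw [ha] at hjn ⊢
    rw [S_succ_eq, hsign]
    push_cast at hjn ⊢
    linear_combination 2 * (-1 : ℤ) ^ beatty n * hjn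

theorem S_nonneg (n : ℕ) : 0 ≤ S θ n := by
  induction n using Nat.strong_induction_on with
  | _ n ih =>
  rcases Nat.eq_zero_or_pos n with rfl | hn
  · rw [S_zero]
  have hlt := two_mul_beatty_add_beatty_beatty_lt hn.ne'
  have hle := le_two_mul_beatty_add_beatty_succ n
  have hc := ih (beatty (beatty n)) (by omega)
  rw [S_eq_renormalized]
  rcases Nat.even_or_odd (beatty n) with he | ho
  · rw [he.neg_one_pow]; omega
  rw [ho.neg_one_pow]
  rcases beatty_succ_eq_or (beatty n) with ha | ha
  · omega
  have hja := eq_of_beatty_succ ha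
  have hodd : Odd (beatty (beatty (beatty n) + 1)) := by
    obtain ⟨k, hk⟩ := ho
    exact ⟨k - beatty (beatty n) - 1, by omega⟩
  have hc1 := ih (beatty (beatty n) + 1) (by omega)
  rw [S_succ_eq, hodd.neg_one_pow] at hc1
  omega

end SqrtTwoSubOne

theorem stmt_3 (n : ℕ) : 0 ≤ S (Real.sqrt 2 - 1) n :=
  SqrtTwoSubOne.S_nonneg n
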